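/- arXiv:2306.10189 — 6 statements merged into one kernel-verified Lean document; each statement's English description precedes it below -/
import Mathlib

section
/- For every v ∈ ℝ^d, the occupation kernel L_x^*(v) ∈ H, defined as the Riesz representer of the continuous linear functional f ↦ vᵀ L_x(f) = vᵀ ∫_a^b f(x(t)) dt, is given pointwise by L_x^*(v)(y) = [∫_a^b K(y, x(t)) dt] v for every y ∈ ℝ^d. -/
open scoped RealInnerProductSpace

/-- For every `v ∈ ℝ^d`, the occupation kernel `L_x^*(v) ∈ H`, the Riesz
representer of `f ↦ vᵀ ∫_a^b f(x(t)) dt`, is given pointwise by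
`L_x^*(v)(y) = [∫_a^b K(y, x(t)) dt] v`. -/
theorem stmt_8
    (d : ℕ) (hd : 1 ≤ d)
    (H : Type*) [NormedAddCommGroup H] [InnerProductSpace ℝ H] [CompleteSpace H]
    (ev : H →ₗ[ℝ] (EuclideanSpace ℝ (Fin d) → EuclideanSpace ℝ (Fin d)))
    (hevc : ∀ f : H, Continuous (ev f))
    (Krepr : EuclideanSpace ℝ (Fin d) → EuclideanSpace ℝ (Fin d) → H)
    (hrepr : ∀ (x v : EuclideanSpace ℝ (Fin d)) (f : H),
      ⟪v, ev f x⟫ = ⟪f, Krepr x v⟫)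
    (Kmat : EuclideanSpace ℝ (Fin d) → EuclideanSpace ℝ (Fin d) → Fin d → Fin d → ℝ)
    (hKmat : ∀ x y i j, Kmat x y i j =
      ⟪Krepr x (EuclideanSpace.single i 1), Krepr y (EuclideanSpace.single j 1)⟫)
    -- every entry of `K` is continuous on `ℝ^d × ℝ^d`
    (hKc : ∀ i j : Fin d, Continuous fun p :
      EuclideanSpace ℝ (Fin d) × EuclideanSpace ℝ (Fin d) => Kmat p.1 p.2 i j)
    (a b : ℝ) (hab : a ≤ b)
    (x : ℝ → EuclideanSpace ℝ (Fin d)) (hx : ContinuousOn x (Set.Icc a b))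
    -- `L_x` is a continuous linear map
    (hLc : Continuous (fun f : H => ∫ t in a..b, ev f (x t)))
    -- `L_x^*(v)` is the Riesz representer of `f ↦ vᵀ L_x(f)`
    (Lstar : EuclideanSpace ℝ (Fin d) → H)
    (hLstar : ∀ (v : EuclideanSpace ℝ (Fin d)) (f : H),
      ⟪v, ∫ t in a..b, ev f (x t)⟫ = ⟪f, Lstar v⟫) :
    ∀ (v y : EuclideanSpace ℝ (Fin d)) (i : Fin d),
      ev (Lstar v) y i = ∑ j, (∫ t in a..b, Kmat y (x t) i j) * v j := by
  intro v y i
  set g : H := Krepr y (EuclideanSpace.single i 1) with hg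
  have hint : IntervalIntegrable (fun t => ev g (x t)) MeasureTheory.volume a b := by
    apply ContinuousOn.intervalIntegrable
    rw [Set.uIcc_of_le hab]
    exact (hevc g).comp_continuousOn hx
  have hcoord : ∀ j : Fin d,
      (∫ t in a..b, ev g (x t)) j = ∫ t in a..b, Kmat y (x t) i j := by
    intro j
    have P : EuclideanSpace ℝ (Fin d) →L[ℝ] ℝ := EuclideanSpace.proj j
    have := (EuclideanSpace.proj j : EuclideanSpace ℝ (Fin d) →L[ℝ] ℝ).intervalIntegral_comp_comm hint
    have h2 : ∀ t, (EuclideanSpace.proj j : EuclideanSpace ℝ (Fin d) →L[ℝ] ℝ) (ev g (x t))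
        = Kmat y (x t) i j := by
      intro t
      have := hrepr (x t) (EuclideanSpace.single j 1) g
      rw [EuclideanSpace.inner_single_left] at this
      simp only [map_one, one_mul] at this
      rw [hKmat, ← hg]
      simpa using this
    calc (∫ t in a..b, ev g (x t)) j
        = (EuclideanSpace.proj j : EuclideanSpace ℝ (Fin d) →L[ℝ] ℝ) (∫ t in a..b, ev g (x t)) := rfl
      _ = ∫ t in a..b, (EuclideanSpace.proj j : EuclideanSpace ℝ (Fin d) →L[ℝ] ℝ) (ev g (x t)) := this.symm
      _ = ∫ t in a..b, Kmat y (x t) i j := by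
          congr 1; funext t; exact h2 t
  have h1 : ev (Lstar v) y i = ⟪Lstar v, g⟫ := by
    have := hrepr y (EuclideanSpace.single i 1) (Lstar v)
    rw [EuclideanSpace.inner_single_left] at this
    simpa using this
  have h2 : ⟪Lstar v, g⟫ = ⟪v, ∫ t in a..b, ev g (x t)⟫ := by
    rw [real_inner_comm]; exact (hLstar v g).symm
  rw [h1, h2, PiLp.inner_apply]
  simp only [RCLike.inner_apply, starRingEnd_apply, star_trivial]
  rw [Finset.sum_congr rfl fun j _ => by rw [hcoord j]]
end

section
/- For two continuous curves x : [a,b] → ℝ^d and y : [c,e] → ℝ^d with continuous occupation maps L_x, L_y and occupation kernels L_x^*(v), L_y^*(w) ∈ H, one has ⟨L_x^*(v), L_y^*(w)⟩_H = vᵀ [∫_a^b ∫_c^e K(x(s), y(t)) dt ds] w for all v, w ∈ ℝ^d. -/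
open scoped RealInnerProductSpace
open MeasureTheory

/-- For two continuous curves `x : [a,b] → ℝ^d` and `y : [c,e] → ℝ^d` with
occupation kernels `L_x^*(v), L_y^*(w) ∈ H`, one has
`⟪L_x^*(v), L_y^*(w)⟫_H = vᵀ [∫_a^b ∫_c^e K(x(s), y(t)) dt ds] w`. -/
theorem stmt_9
    (d : ℕ) (hd : 1 ≤ d)
    (H : Type*) [NormedAddCommGroup H] [InnerProductSpace ℝ H] [CompleteSpace H]
    (ev : H →ₗ[ℝ] (EuclideanSpace ℝ (Fin d) → EuclideanSpace ℝ (Fin d)))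
    (hevc : ∀ f : H, Continuous (ev f))
    (Krepr : EuclideanSpace ℝ (Fin d) → EuclideanSpace ℝ (Fin d) → H)
    (hrepr : ∀ (x v : EuclideanSpace ℝ (Fin d)) (f : H),
      ⟪v, ev f x⟫ = ⟪f, Krepr x v⟫)
    (Kmat : EuclideanSpace ℝ (Fin d) → EuclideanSpace ℝ (Fin d) → Fin d → Fin d → ℝ)
    (hKmat : ∀ x y i j, Kmat x y i j =
      ⟪Krepr x (EuclideanSpace.single i 1), Krepr y (EuclideanSpace.single j 1)⟫)
    (hKc : ∀ i j : Fin d, Continuous fun p :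
      EuclideanSpace ℝ (Fin d) × EuclideanSpace ℝ (Fin d) => Kmat p.1 p.2 i j)
    (a b c e : ℝ) (hab : a ≤ b) (hce : c ≤ e)
    (x y : ℝ → EuclideanSpace ℝ (Fin d))
    (hx : ContinuousOn x (Set.Icc a b)) (hy : ContinuousOn y (Set.Icc c e))
    (hLxc : Continuous (fun f : H => ∫ t in a..b, ev f (x t)))
    (hLyc : Continuous (fun f : H => ∫ t in c..e, ev f (y t)))
    (Lxstar Lystar : EuclideanSpace ℝ (Fin d) → H)
    (hLxstar : ∀ (v : EuclideanSpace ℝ (Fin d)) (f : H),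
      ⟪v, ∫ t in a..b, ev f (x t)⟫ = ⟪f, Lxstar v⟫)
    (hLystar : ∀ (w : EuclideanSpace ℝ (Fin d)) (f : H),
      ⟪w, ∫ t in c..e, ev f (y t)⟫ = ⟪f, Lystar w⟫) :
    ∀ v w : EuclideanSpace ℝ (Fin d),
      ⟪Lxstar v, Lystar w⟫ =
        ∑ i, ∑ j, v i * (∫ s in a..b, ∫ t in c..e, Kmat (x s) (y t) i j) * w j := by
  intro v w
  classical
  set x' : ℝ → EuclideanSpace ℝ (Fin d) := fun s => x (Set.projIcc a b hab s) with hx'def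
  set y' : ℝ → EuclideanSpace ℝ (Fin d) := fun t => y (Set.projIcc c e hce t) with hy'def
  have hx' : Continuous x' := by
    have := hx.comp_continuous (continuous_subtype_val.comp continuous_projIcc)
      (fun s => (Set.projIcc a b hab s).2)
    exact this
  have hy' : Continuous y' := by
    have := hy.comp_continuous (continuous_subtype_val.comp continuous_projIcc)
      (fun t => (Set.projIcc c e hce t).2)
    exact this
  have hxeq : ∀ s ∈ Set.uIcc a b, x' s = x s := by
    intro s hs
    rw [Set.uIcc_of_le hab] at hs
    simp only [hx'def, Set.projIcc_of_mem hab hs]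
  have hyeq : ∀ t ∈ Set.uIcc c e, y' t = y t := by
    intro t ht
    rw [Set.uIcc_of_le hce] at ht
    simp only [hy'def, Set.projIcc_of_mem hce ht]
  -- coordinates of ev
  have coord : ∀ (f : H) (u : EuclideanSpace ℝ (Fin d)) (j : Fin d),
      ev f u j = ⟪f, Krepr u (EuclideanSpace.single j 1)⟫ := by
    intro f u j
    rw [← hrepr]
    rw [EuclideanSpace.inner_single_left]
    simp
  -- key pointwise formula
  have key : ∀ (z : EuclideanSpace ℝ (Fin d)) (i : Fin d),
      ev (Lystar w) z i = ∑ j, w j * ∫ t in c..e, Kmat z (y' t) i j := by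
    intro z i
    rw [coord, real_inner_comm, ← hLystar]
    have hye : (∫ t in c..e, ev (Krepr z (EuclideanSpace.single i 1)) (y t))
        = ∫ t in c..e, ev (Krepr z (EuclideanSpace.single i 1)) (y' t) :=
      (intervalIntegral.integral_congr fun t ht => by rw [hyeq t ht]).symm
    rw [hye, PiLp.inner_apply]
    refine Finset.sum_congr rfl fun j _ => ?_
    have hint : IntervalIntegrable
        (fun t => ev (Krepr z (EuclideanSpace.single i 1)) (y' t)) volume c e :=
      ((hevc _).comp hy').intervalIntegrable c e
    have h2 : (∫ t in c..e, ev (Krepr z (EuclideanSpace.single i 1)) (y' t)) j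
        = ∫ t in c..e, ev (Krepr z (EuclideanSpace.single i 1)) (y' t) j := by
      have h := (EuclideanSpace.proj (𝕜 := ℝ) j).intervalIntegral_comp_comm hint
      simpa using h.symm
    rw [RCLike.inner_apply, conj_trivial, h2]
    rw [mul_comm]
    congr 1
    refine intervalIntegral.integral_congr fun t _ => ?_
    rw [coord, ← hKmat]
  -- continuity of the inner integral as function of z
  have hcont_inner : ∀ i j : Fin d,
      Continuous fun z : EuclideanSpace ℝ (Fin d) => ∫ t in c..e, Kmat z (y' t) i j := by
    intro i j
    have h1 : Continuous (Function.uncurry fun (z : EuclideanSpace ℝ (Fin d)) (t : ℝ) => Kmat z (y' t) i j) := by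
      have := (hKc i j).comp
        (continuous_fst.prodMk (hy'.comp continuous_snd)
          : Continuous fun p : EuclideanSpace ℝ (Fin d) × ℝ => (p.1, y' p.2))
      exact this
    have h2 := continuous_parametric_integral_of_continuous (μ := (volume : MeasureTheory.Measure ℝ)) h1
      (isCompact_Icc (a := c) (b := e))
    have h3 : (fun z : EuclideanSpace ℝ (Fin d) => ∫ t in c..e, Kmat z (y' t) i j)
        = fun z : EuclideanSpace ℝ (Fin d) => ∫ t in Set.Icc c e, Kmat z (y' t) i j := by
      funext z
      rw [intervalIntegral.integral_of_le hce, ← MeasureTheory.integral_Icc_eq_integral_Ioc]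
    rw [h3]
    exact h2
  -- main chain
  have step1 : ⟪Lxstar v, Lystar w⟫ = ⟪v, ∫ s in a..b, ev (Lystar w) (x s)⟫ := by
    rw [real_inner_comm, ← hLxstar]
  rw [step1]
  have hxe : (∫ s in a..b, ev (Lystar w) (x s))
      = ∫ s in a..b, ev (Lystar w) (x' s) :=
    (intervalIntegral.integral_congr fun s hs => by rw [hxeq s hs]).symm
  rw [hxe, PiLp.inner_apply]
  have hintx : IntervalIntegrable (fun s => ev (Lystar w) (x' s)) volume a b :=
    ((hevc _).comp hx').intervalIntegrable a b
  have hII : ∀ i j, (∫ s in a..b, ∫ t in c..e, Kmat (x' s) (y' t) i j)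
      = ∫ s in a..b, ∫ t in c..e, Kmat (x s) (y t) i j := by
    intro i j
    refine intervalIntegral.integral_congr fun s hs => ?_
    rw [hxeq s hs]
    exact intervalIntegral.integral_congr fun t ht => by rw [hyeq t ht]
  refine Finset.sum_congr rfl fun i _ => ?_
  have h2 : (∫ s in a..b, ev (Lystar w) (x' s)) i
      = ∫ s in a..b, ev (Lystar w) (x' s) i := by
    have h := (EuclideanSpace.proj (𝕜 := ℝ) i).intervalIntegral_comp_comm hintx
    simpa using h.symm
  rw [RCLike.inner_apply, conj_trivial, h2]
  have h3 : (∫ s in a..b, ev (Lystar w) (x' s) i)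
      = ∑ j, w j * ∫ s in a..b, ∫ t in c..e, Kmat (x' s) (y' t) i j := by
    rw [intervalIntegral.integral_congr (g := fun s => ∑ j, w j * ∫ t in c..e, Kmat (x' s) (y' t) i j)
      (fun s _ => key (x' s) i)]
    rw [intervalIntegral.integral_finset_sum]
    · refine Finset.sum_congr rfl fun j _ => ?_
      rw [intervalIntegral.integral_const_mul]
    · intro j _
      exact (continuous_const.mul ((hcont_inner i j).comp hx')).intervalIntegrable a b
  rw [h3, mul_comm, Finset.mul_sum]
  refine Finset.sum_congr rfl fun j _ => ?_
  rw [hII i j]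
  ring
end

section
/- For every f ∈ H, J(P_F f) ≤ J(f), where P_F is the orthogonal projection of H onto F; consequently the infimum of J over H equals the infimum of J over the finite-dimensional subspace F, and any minimizer of J over H belongs to F. -/
/-!
The data term of `J` sees `f` only through the numbers `⟪f, L*_i v⟫`, which do not change
when `f` is replaced by `P_F f`, since `f - P_F f ⊥ F ∋ L*_i v`. By Pythagoras the penalty
drops by exactly `λ ‖f - P_F f‖²`, so `J (P_F f) + λ ‖f - P_F f‖² = J f`; all three claims
follow from this identity and `J ≥ 0`.
-/

open scoped RealInnerProductSpace

section ConditionallyCompleteLattice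

variable {α ι : Type*} [ConditionallyCompleteLattice α] [Nonempty ι]

theorem ciInf_eq_ciInf_subtype_of_forall_exists_le {f : ι → α} {s : Set ι}
    (hf : BddBelow (Set.range f)) (hs : ∀ i, ∃ j ∈ s, f j ≤ f i) :
    ⨅ i, f i = ⨅ j : s, f j := by
  obtain ⟨i₀⟩ := ‹Nonempty ι›
  obtain ⟨j₀, hj₀, -⟩ := hs i₀
  have : Nonempty s := ⟨⟨j₀, hj₀⟩⟩
  refine le_antisymm (le_ciInf fun j => ciInf_le hf (j : ι)) (le_ciInf fun i => ?_)
  obtain ⟨j, hj, hji⟩ := hs i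
  have hfs : BddBelow (Set.range fun j : s => f j) := hf.mono (Set.range_comp_subset_range _ f)
  exact (ciInf_le hfs ⟨j, hj⟩).trans hji

end ConditionallyCompleteLattice

section InnerProductSpace

variable {E V : Type*} [NormedAddCommGroup E] [InnerProductSpace ℝ E]
  [NormedAddCommGroup V] [InnerProductSpace ℝ V] {K : Submodule ℝ E} {f p : E}

theorem apply_eq_of_sub_mem_orthogonal (L : E → V) (Ls : V → E)
    (hL : ∀ v f, ⟪v, L f⟫ = ⟪f, Ls v⟫) (hLs : ∀ v, Ls v ∈ K) (h : f - p ∈ Kᗮ) :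
    L f = L p :=
  ext_inner_left ℝ fun v => by
    rw [hL, hL, ← sub_eq_zero, ← inner_sub_left]
    exact (Submodule.mem_orthogonal' K _).mp h _ (hLs v)

theorem norm_sq_eq_norm_sq_add_norm_sub_sq (hp : p ∈ K) (hfp : f - p ∈ Kᗮ) :
    ‖f‖ ^ 2 = ‖p‖ ^ 2 + ‖f - p‖ ^ 2 := by
  have h := norm_add_sq_eq_norm_sq_add_norm_sq_real ((Submodule.mem_orthogonal K _).mp hfp p hp)
  rw [add_sub_cancel] at h
  simpa only [sq] using h

theorem apply_add_mul_norm_sub_sq_eq {J R : E → ℝ} {lam : ℝ}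
    (hJ : ∀ f, J f = R f + lam * ‖f‖ ^ 2) (hR : R p = R f) (hp : p ∈ K) (hfp : f - p ∈ Kᗮ) :
    J p + lam * ‖f - p‖ ^ 2 = J f := by
  rw [hJ, hJ, hR, norm_sq_eq_norm_sq_add_norm_sub_sq hp hfp]
  ring

end InnerProductSpace

theorem stmt_11_general
    (d n : ℕ)
    (H : Type*) [NormedAddCommGroup H] [InnerProductSpace ℝ H]
    (ev : H →ₗ[ℝ] (EuclideanSpace ℝ (Fin d) → EuclideanSpace ℝ (Fin d)))
    (a b : Fin n → ℝ)
    (x : Fin n → ℝ → EuclideanSpace ℝ (Fin d))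
    (Lstar : Fin n → EuclideanSpace ℝ (Fin d) → H)
    (hLstar : ∀ (i : Fin n) (v : EuclideanSpace ℝ (Fin d)) (f : H),
      ⟪v, ∫ t in a i..b i, ev f (x i t)⟫ = ⟪f, Lstar i v⟫)
    (F : Submodule ℝ H)
    (hF : F = Submodule.span ℝ {g : H | ∃ (i : Fin n) (v : EuclideanSpace ℝ (Fin d)), g = Lstar i v})
    (pF : H →ₗ[ℝ] H) (hpF : ∀ f : H, pF f ∈ F) (hpF' : ∀ f : H, f - pF f ∈ Fᗮ)
    -- the regularized loss `J`
    (lam : ℝ) (hlam : 0 < lam)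
    (J : H → ℝ)
    (hJ : ∀ f : H, J f = (1 / (n : ℝ)) *
        (∑ i, ‖(∫ t in a i..b i, ev f (x i t)) - x i (b i) + x i (a i)‖ ^ 2)
      + lam * ‖f‖ ^ 2) :
    (∀ f : H, J (pF f) ≤ J f)
    ∧ (⨅ f : H, J f) = (⨅ g : F, J (g : H))
    ∧ (∀ f : H, (∀ g : H, J f ≤ J g) → f ∈ F) := by
  have hLs : ∀ i v, Lstar i v ∈ F := fun i v => hF ▸ Submodule.subset_span ⟨i, v, rfl⟩
  have hdrop : ∀ f, J (pF f) + lam * ‖f - pF f‖ ^ 2 = J f := fun f =>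
    apply_add_mul_norm_sub_sq_eq hJ (by
      simp only [apply_eq_of_sub_mem_orthogonal _ _ (hLstar _) (hLs _) (hpF' f)])
      (hpF f) (hpF' f)
  have hJle : ∀ f, J (pF f) ≤ J f := fun f => by
    nlinarith [hdrop f, sq_nonneg ‖f - pF f‖]
  have hJ0 : ∀ f, 0 ≤ J f := fun f => by
    rw [hJ]
    have := Finset.sum_nonneg fun i (_ : i ∈ Finset.univ) =>
      sq_nonneg ‖(∫ t in a i..b i, ev f (x i t)) - x i (b i) + x i (a i)‖
    positivity
  refine ⟨hJle, ciInf_eq_ciInf_subtype_of_forall_exists_le ⟨0, ?_⟩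
    fun f => ⟨pF f, hpF f, hJle f⟩, fun f hmin => ?_⟩
  · rintro _ ⟨f, rfl⟩
    exact hJ0 f
  · have hzero : ‖f - pF f‖ ^ 2 = 0 := by
      nlinarith [hdrop f, hmin (pF f), sq_nonneg ‖f - pF f‖]
    rw [sub_eq_zero.mp (norm_eq_zero.mp (pow_eq_zero_iff two_ne_zero |>.mp hzero))]
    exact hpF f

/-- `J(P_F f) ≤ J(f)` for every `f ∈ H`; consequently the infimum of `J`
over `H` equals the infimum of `J` over `F`, and any minimizer of `J` over `H` belongs
to `F`. -/
theorem stmt_11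
    (d n : ℕ) (hd : 1 ≤ d)
    (H : Type*) [NormedAddCommGroup H] [InnerProductSpace ℝ H] [CompleteSpace H]
    (ev : H →ₗ[ℝ] (EuclideanSpace ℝ (Fin d) → EuclideanSpace ℝ (Fin d)))
    (hevc : ∀ f : H, Continuous (ev f))
    (Krepr : EuclideanSpace ℝ (Fin d) → EuclideanSpace ℝ (Fin d) → H)
    (hrepr : ∀ (x v : EuclideanSpace ℝ (Fin d)) (f : H),
      ⟪v, ev f x⟫ = ⟪f, Krepr x v⟫)
    (Kmat : EuclideanSpace ℝ (Fin d) → EuclideanSpace ℝ (Fin d) → Fin d → Fin d → ℝ)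
    (hKmat : ∀ x y i j, Kmat x y i j =
      ⟪Krepr x (EuclideanSpace.single i 1), Krepr y (EuclideanSpace.single j 1)⟫)
    (hKc : ∀ i j : Fin d, Continuous fun p :
      EuclideanSpace ℝ (Fin d) × EuclideanSpace ℝ (Fin d) => Kmat p.1 p.2 i j)
    (a b : Fin n → ℝ) (hab : ∀ i, a i ≤ b i)
    (x : Fin n → ℝ → EuclideanSpace ℝ (Fin d))
    (hx : ∀ i, ContinuousOn (x i) (Set.Icc (a i) (b i)))
    (hLc : ∀ i, Continuous (fun f : H => ∫ t in a i..b i, ev f (x i t)))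
    (Lstar : Fin n → EuclideanSpace ℝ (Fin d) → H)
    (hLstar : ∀ (i : Fin n) (v : EuclideanSpace ℝ (Fin d)) (f : H),
      ⟪v, ∫ t in a i..b i, ev f (x i t)⟫ = ⟪f, Lstar i v⟫)
    (F : Submodule ℝ H)
    (hF : F = Submodule.span ℝ {g : H | ∃ (i : Fin n) (v : EuclideanSpace ℝ (Fin d)), g = Lstar i v})
    (pF : H →ₗ[ℝ] H) (hpF : ∀ f : H, pF f ∈ F) (hpF' : ∀ f : H, f - pF f ∈ Fᗮ)
    -- the regularized loss `J`
    (lam : ℝ) (hlam : 0 < lam)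
    (J : H → ℝ)
    (hJ : ∀ f : H, J f = (1 / (n : ℝ)) *
        (∑ i, ‖(∫ t in a i..b i, ev f (x i t)) - x i (b i) + x i (a i)‖ ^ 2)
      + lam * ‖f‖ ^ 2) :
    (∀ f : H, J (pF f) ≤ J f)
    ∧ (⨅ f : H, J f) = (⨅ g : F, J (g : H))
    ∧ (∀ f : H, (∀ g : H, J f ≤ J g) → f ∈ F) :=
  stmt_11_general d n H ev a b x Lstar hLstar F hF pF hpF hpF' lam hlam J hJ
end

section
/- Let A ∈ ℝ^{N×N} be symmetric positive semidefinite, let λ > 0, n ≥ 1, and y ∈ ℝ^N. Then the matrix A + λnI is positive definite, hence invertible, and the unique α* ∈ ℝ^N satisfying (A + λnI)α* = y is a global minimizer over ℝ^N of the function J(α) = (1/n)‖Aα − y‖² + λ αᵀAα. -/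
open Matrix

private lemma dp_self_nonneg {N : ℕ} (v : Fin N → ℝ) : (0:ℝ) ≤ v ⬝ᵥ v :=
  Finset.sum_nonneg fun _ _ => mul_self_nonneg _

/-- For `A ∈ ℝ^{N×N}` symmetric positive semidefinite, `λ > 0`, `n ≥ 1`,
`y ∈ ℝ^N`, the matrix `A + λnI` is positive definite (hence invertible), and the unique
`α*` with `(A + λnI)α* = y` is a global minimizer of
`J(α) = (1/n)‖Aα − y‖² + λ αᵀAα`. -/
theorem stmt_14
    (N : ℕ) (A : Matrix (Fin N) (Fin N) ℝ)
    (hA : A.IsSymm) (hA' : A.PosSemidef)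
    (lam : ℝ) (hlam : 0 < lam)
    (n : ℕ) (hn : 1 ≤ n)
    (y : Fin N → ℝ)
    (J : (Fin N → ℝ) → ℝ)
    (hJ : ∀ α, J α = (1 / (n : ℝ)) * ((A.mulVec α - y) ⬝ᵥ (A.mulVec α - y))
      + lam * (α ⬝ᵥ A.mulVec α)) :
    (A + (lam * (n : ℝ)) • (1 : Matrix (Fin N) (Fin N) ℝ)).PosDef
    ∧ IsUnit (A + (lam * (n : ℝ)) • (1 : Matrix (Fin N) (Fin N) ℝ))
    ∧ (∃! α : Fin N → ℝ,
        (A + (lam * (n : ℝ)) • (1 : Matrix (Fin N) (Fin N) ℝ)).mulVec α = y)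
    ∧ (∀ α : Fin N → ℝ,
        (A + (lam * (n : ℝ)) • (1 : Matrix (Fin N) (Fin N) ℝ)).mulVec α = y →
        ∀ β : Fin N → ℝ, J α ≤ J β) := by
  have hn0 : (0 : ℝ) < (n : ℝ) := by exact_mod_cast hn
  have hc : 0 < lam * (n : ℝ) := mul_pos hlam hn0
  set c : ℝ := lam * (n : ℝ) with hcdef
  set M : Matrix (Fin N) (Fin N) ℝ := A + c • (1 : Matrix (Fin N) (Fin N) ℝ) with hM
  have hMvec : ∀ x, M.mulVec x = A.mulVec x + c • x := by
    intro x
    simp [hM, add_mulVec, smul_mulVec]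
  have hPD : M.PosDef := by
    rw [posDef_iff_dotProduct_mulVec]
    constructor
    · unfold Matrix.IsHermitian
      rw [show Mᴴ = Mᵀ from rfl]
      rw [hM, transpose_add, transpose_smul, transpose_one, hA]
    · intro x hx
      have h1 : (0:ℝ) ≤ x ⬝ᵥ A.mulVec x := hA'.dotProduct_mulVec_nonneg x
      have h2 : (0:ℝ) < x ⬝ᵥ x := by
        have := dotProduct_self_eq_zero (v := x)
        rcases lt_or_eq_of_le (dp_self_nonneg x) with h | h
        · exact h
        · exact absurd (this.mp h.symm) hx
      have : star x = x := rfl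
      rw [this, hMvec, dotProduct_add, dotProduct_smul]
      have : (0:ℝ) < c * (x ⬝ᵥ x) := mul_pos hc h2
      simp only [smul_eq_mul]
      linarith
  have hUnit : IsUnit M := hPD.isUnit
  refine ⟨hPD, hUnit, ?_, ?_⟩
  · have hinj : Function.Injective M.mulVec := mulVec_injective_iff_isUnit.mpr hUnit
    have := hUnit.invertible
    refine ⟨M⁻¹.mulVec y, ?_, fun z hz => hinj ?_⟩
    · show M *ᵥ M⁻¹ *ᵥ y = y
      rw [mulVec_mulVec, mul_nonsing_inv _ (isUnit_iff_isUnit_det _ |>.mp hUnit), one_mulVec]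
    · rw [hz]
      rw [mulVec_mulVec, mul_nonsing_inv _ (isUnit_iff_isUnit_det _ |>.mp hUnit), one_mulVec]
  · intro α hα β
    have hsol : A.mulVec α + c • α = y := by rw [← hMvec]; exact hα
    set d : Fin N → ℝ := β - α with hd
    have hβ : β = α + d := by simp [hd]
    have hsymm : ∀ u v : Fin N → ℝ, u ⬝ᵥ A.mulVec v = A.mulVec u ⬝ᵥ v := by
      intro u v
      rw [dotProduct_mulVec, ← mulVec_transpose, hA.eq, dotProduct_comm]
    have key : J β - J α = (1 / (n:ℝ)) * (A.mulVec d ⬝ᵥ A.mulVec d) + lam * (d ⬝ᵥ A.mulVec d) := by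
      have hAβ : A.mulVec β - y = A.mulVec d - c • α := by
        rw [hβ, mulVec_add, ← hsol]; abel
      have hAα : A.mulVec α - y = - (c • α) := by rw [← hsol]; abel
      rw [hJ β, hJ α, hAβ, hAα]
      rw [hβ]
      simp only [mulVec_add, dotProduct_add, add_dotProduct, dotProduct_sub, sub_dotProduct,
        neg_dotProduct, dotProduct_neg, neg_neg, smul_dotProduct, dotProduct_smul, smul_eq_mul]
      have h1 : α ⬝ᵥ A.mulVec d = A.mulVec α ⬝ᵥ d := hsymm α d
      have h2 : d ⬝ᵥ A.mulVec α = A.mulVec d ⬝ᵥ α := hsymm d α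
      have h3 : α ⬝ᵥ d = d ⬝ᵥ α := dotProduct_comm α d
      have hne : (n:ℝ) ≠ 0 := ne_of_gt hn0
      field_simp [hcdef] at *
      ring_nf
      rw [← h2]
      ring
    have h1 : (0:ℝ) ≤ A.mulVec d ⬝ᵥ A.mulVec d := dp_self_nonneg _
    have h2 : (0:ℝ) ≤ d ⬝ᵥ A.mulVec d := hA'.dotProduct_mulVec_nonneg d
    have : (0:ℝ) ≤ J β - J α := by
      have := mul_nonneg (le_of_lt hlam) h2
      have := mul_nonneg (le_of_lt (by positivity : (0:ℝ) < 1/(n:ℝ))) h1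
      linarith [key]
    linarith
end

section
/- (Theorem 1) The loss J has a unique minimizer f* over H, and f* = Σ_{i=1}^n L_{x_i}^*(α_i), where the stacked coefficient vector α = (α_1ᵀ,…,α_nᵀ)ᵀ ∈ ℝ^{nd} is the (unique) solution of the linear system (L* + λnI)α = x(b) − x(a); here x(a) = (x_1(a_1)ᵀ,…,x_n(a_n)ᵀ)ᵀ, x(b) = (x_1(b_1)ᵀ,…,x_n(b_n)ᵀ)ᵀ ∈ ℝ^{nd}, and L* ∈ ℝ^{nd×nd} is the block matrix with (d×d) blocks L*_{ij} = ∫_{a_j}^{b_j} ∫_{a_i}^{b_i} K(x_i(s), x_j(t)) ds dt. -/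
open scoped RealInnerProductSpace
open MeasureTheory

/-- Theorem 1: The loss `J` has a unique minimizer `f*` over `H`, and
`f* = Σ_i L_{x_i}^*(α_i)` where `α` is the unique solution of the linear system
`(L* + λnI)α = x(b) − x(a)`, with block Gram matrix
`L*_{ij} = ∫_{a_j}^{b_j} ∫_{a_i}^{b_i} K(x_i(s), x_j(t)) ds dt`. -/
theorem stmt_15
    (d n : ℕ) (hd : 1 ≤ d)
    (H : Type*) [NormedAddCommGroup H] [InnerProductSpace ℝ H] [CompleteSpace H]
    (ev : H →ₗ[ℝ] (EuclideanSpace ℝ (Fin d) → EuclideanSpace ℝ (Fin d)))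
    (hevc : ∀ f : H, Continuous (ev f))
    (Krepr : EuclideanSpace ℝ (Fin d) → EuclideanSpace ℝ (Fin d) → H)
    (hrepr : ∀ (x v : EuclideanSpace ℝ (Fin d)) (f : H),
      ⟪v, ev f x⟫ = ⟪f, Krepr x v⟫)
    (Kmat : EuclideanSpace ℝ (Fin d) → EuclideanSpace ℝ (Fin d) → Fin d → Fin d → ℝ)
    (hKmat : ∀ x y i j, Kmat x y i j =
      ⟪Krepr x (EuclideanSpace.single i 1), Krepr y (EuclideanSpace.single j 1)⟫)
    (hKc : ∀ i j : Fin d, Continuous fun p :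
      EuclideanSpace ℝ (Fin d) × EuclideanSpace ℝ (Fin d) => Kmat p.1 p.2 i j)
    (a b : Fin n → ℝ) (hab : ∀ i, a i ≤ b i)
    (x : Fin n → ℝ → EuclideanSpace ℝ (Fin d))
    (hx : ∀ i, ContinuousOn (x i) (Set.Icc (a i) (b i)))
    (hLc : ∀ i, Continuous (fun f : H => ∫ t in a i..b i, ev f (x i t)))
    (Lstar : Fin n → EuclideanSpace ℝ (Fin d) → H)
    (hLstar : ∀ (i : Fin n) (v : EuclideanSpace ℝ (Fin d)) (f : H),
      ⟪v, ∫ t in a i..b i, ev f (x i t)⟫ = ⟪f, Lstar i v⟫)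
    (Lb : Fin n → Fin n → Fin d → Fin d → ℝ)
    (hLb : ∀ i j p q, Lb i j p q =
      ∫ t in a j..b j, ∫ s in a i..b i, Kmat (x i s) (x j t) p q)
    (lam : ℝ) (hlam : 0 < lam)
    (J : H → ℝ)
    (hJ : ∀ f : H, J f = (1 / (n : ℝ)) *
        (∑ i, ‖(∫ t in a i..b i, ev f (x i t)) - x i (b i) + x i (a i)‖ ^ 2)
      + lam * ‖f‖ ^ 2) :
    -- `J` has a unique minimizer over `H`
    (∃! f : H, ∀ g : H, J f ≤ J g)
    -- the linear system `(L* + λnI)α = x(b) − x(a)` has a unique solution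
    ∧ (∃! α : Fin n → EuclideanSpace ℝ (Fin d), ∀ (i : Fin n) (p : Fin d),
        (∑ j, ∑ q, Lb i j p q * α j q) + lam * (n : ℝ) * α i p =
          x i (b i) p - x i (a i) p)
    -- and the minimizer is `f* = Σ_i L_{x_i}^*(α_i)` for that solution `α`
    ∧ (∀ (f : H) (α : Fin n → EuclideanSpace ℝ (Fin d)),
        (∀ g : H, J f ≤ J g) →
        (∀ (i : Fin n) (p : Fin d),
          (∑ j, ∑ q, Lb i j p q * α j q) + lam * (n : ℝ) * α i p =
            x i (b i) p - x i (a i) p) →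
        f = ∑ i, Lstar i (α i)) := by
  classical
  -- continuity and integrability of the evaluated curves
  have h_cont : ∀ (g : H) (i : Fin n),
      ContinuousOn (fun t => ev g (x i t)) (Set.Icc (a i) (b i)) :=
    fun g i => (hevc g).comp_continuousOn (hx i)
  have h_int : ∀ (g : H) (i : Fin n),
      IntervalIntegrable (fun t => ev g (x i t)) volume (a i) (b i) := by
    intro g i
    apply ContinuousOn.intervalIntegrable
    rw [Set.uIcc_of_le (hab i)]
    exact h_cont g i
  have h_swap : ∀ (g : H) (i : Fin n) (v : EuclideanSpace ℝ (Fin d)),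
      ⟪v, ∫ t in a i..b i, ev g (x i t)⟫ = ∫ t in a i..b i, ⟪v, ev g (x i t)⟫ := by
    intro g i v
    rw [intervalIntegral.integral_of_le (hab i), intervalIntegral.integral_of_le (hab i)]
    have hI : IntegrableOn (fun t => ev g (x i t)) (Set.Ioc (a i) (b i)) :=
      ((h_cont g i).integrableOn_Icc (μ := volume)).mono_set Set.Ioc_subset_Icc_self
    exact (integral_inner (𝕜 := ℝ) hI v).symm
  have h_single : ∀ (p : Fin d) (w : EuclideanSpace ℝ (Fin d)),
      ⟪(EuclideanSpace.single p 1 : EuclideanSpace ℝ (Fin d)), w⟫ = w p := by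
    intro p w; simp [EuclideanSpace.inner_single_left]
  have hTL : ∀ (g : H) (i : Fin n) (p : Fin d),
      (∫ t in a i..b i, ev g (x i t)) p = ⟪g, Lstar i (EuclideanSpace.single p 1)⟫ := by
    intro g i p
    rw [← h_single p (∫ t in a i..b i, ev g (x i t)), hLstar]
  -- the Gram identity
  have hGram : ∀ (i j : Fin n) (p q : Fin d),
      Lb i j p q
        = ⟪Lstar i (EuclideanSpace.single p 1), Lstar j (EuclideanSpace.single q 1)⟫ := by
    intro i j p q
    rw [hLb]
    have step1 : ∀ t : ℝ, (∫ s in a i..b i, Kmat (x i s) (x j t) p q)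
        = ⟪(EuclideanSpace.single q 1 : EuclideanSpace ℝ (Fin d)),
            ev (Lstar i (EuclideanSpace.single p 1)) (x j t)⟫ := by
      intro t
      have e1 : ∀ s : ℝ, Kmat (x i s) (x j t) p q
          = ⟪(EuclideanSpace.single p 1 : EuclideanSpace ℝ (Fin d)),
              ev (Krepr (x j t) (EuclideanSpace.single q 1)) (x i s)⟫ := by
        intro s
        rw [hKmat, real_inner_comm, ← hrepr]
      calc (∫ s in a i..b i, Kmat (x i s) (x j t) p q)
          = ∫ s in a i..b i, ⟪(EuclideanSpace.single p 1 : EuclideanSpace ℝ (Fin d)),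
              ev (Krepr (x j t) (EuclideanSpace.single q 1)) (x i s)⟫ := by
            exact intervalIntegral.integral_congr (fun s _ => e1 s)
        _ = ⟪(EuclideanSpace.single p 1 : EuclideanSpace ℝ (Fin d)),
              ∫ s in a i..b i, ev (Krepr (x j t) (EuclideanSpace.single q 1)) (x i s)⟫ :=
            (h_swap _ i _).symm
        _ = ⟪Krepr (x j t) (EuclideanSpace.single q 1), Lstar i (EuclideanSpace.single p 1)⟫ :=
            hLstar i _ _
        _ = ⟪(EuclideanSpace.single q 1 : EuclideanSpace ℝ (Fin d)),
              ev (Lstar i (EuclideanSpace.single p 1)) (x j t)⟫ := by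
            rw [real_inner_comm, ← hrepr]
    calc (∫ t in a j..b j, ∫ s in a i..b i, Kmat (x i s) (x j t) p q)
        = ∫ t in a j..b j, ⟪(EuclideanSpace.single q 1 : EuclideanSpace ℝ (Fin d)),
            ev (Lstar i (EuclideanSpace.single p 1)) (x j t)⟫ :=
          intervalIntegral.integral_congr (fun t _ => step1 t)
      _ = ⟪(EuclideanSpace.single q 1 : EuclideanSpace ℝ (Fin d)),
            ∫ t in a j..b j, ev (Lstar i (EuclideanSpace.single p 1)) (x j t)⟫ :=
          (h_swap _ j _).symm
      _ = ⟪Lstar i (EuclideanSpace.single p 1), Lstar j (EuclideanSpace.single q 1)⟫ :=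
          hLstar j _ _
  -- component formula for `T (S β)`
  have hTS : ∀ (β : Fin n → EuclideanSpace ℝ (Fin d)) (i : Fin n) (p : Fin d),
      (∫ t in a i..b i, ev (∑ j, Lstar j (β j)) (x i t)) p
        = ∑ j, ∑ q, Lb i j p q * β j q := by
    intro β i p
    rw [hTL, sum_inner]
    refine Finset.sum_congr rfl fun j _ => ?_
    rw [real_inner_comm, ← hLstar j (β j) (Lstar i (EuclideanSpace.single p 1))]
    rw [show ⟪β j, ∫ t in a j..b j, ev (Lstar i (EuclideanSpace.single p 1)) (x j t)⟫
        = ∑ q, β j q * (∫ t in a j..b j, ev (Lstar i (EuclideanSpace.single p 1)) (x j t)) q from by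
      simp [PiLp.inner_apply, RCLike.inner_apply]; exact Finset.sum_congr rfl fun _ _ => mul_comm _ _]
    refine Finset.sum_congr rfl fun q _ => ?_
    rw [hTL, ← hGram]
    ring
  -- additivity of the occupation integrals
  have hTadd : ∀ (f h : H) (i : Fin n),
      (∫ t in a i..b i, ev (f + h) (x i t))
        = (∫ t in a i..b i, ev f (x i t)) + ∫ t in a i..b i, ev h (x i t) := by
    intro f h i
    have e : (fun t => ev (f + h) (x i t))
        = fun t => ev f (x i t) + ev h (x i t) := by
      funext t; rw [map_add]; rfl
    rw [e]
    exact intervalIntegral.integral_add (h_int f i) (h_int h i)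
  rcases Nat.eq_zero_or_pos n with hn | hn
  · -- degenerate case n = 0
    subst hn
    have hJ0 : ∀ f : H, J f = lam * ‖f‖ ^ 2 := by
      intro f; rw [hJ]; simp
    have hmin0 : ∀ f : H, (∀ g : H, J f ≤ J g) → f = 0 := by
      intro f hf
      have h1 := hf 0
      rw [hJ0, hJ0] at h1
      simp only [norm_zero] at h1
      have : ‖f‖ ^ 2 ≤ 0 := by nlinarith
      have : ‖f‖ = 0 := by nlinarith [sq_nonneg ‖f‖, norm_nonneg f]
      exact norm_eq_zero.mp this
    refine ⟨⟨0, ?_, hmin0⟩, ⟨fun _ => 0, fun i => i.elim0, fun β _ => funext fun i => i.elim0⟩, ?_⟩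
    · intro g
      rw [hJ0, hJ0]
      simp only [norm_zero]
      nlinarith [sq_nonneg ‖g‖]
    · intro f α hf _
      rw [hmin0 f hf]
      simp
  · -- main case n ≥ 1
    have hn' : (0 : ℝ) < n := by exact_mod_cast hn
    -- the master lemma: any solution of the linear system yields the unique minimizer
    have main : ∀ (β : Fin n → EuclideanSpace ℝ (Fin d)),
        (∀ (i : Fin n) (p : Fin d),
          (∑ j, ∑ q, Lb i j p q * β j q) + lam * (n : ℝ) * β i p
            = x i (b i) p - x i (a i) p) →
        (∀ g : H, J (∑ j, Lstar j (β j)) ≤ J g)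
          ∧ ∀ f : H, (∀ g : H, J f ≤ J g) → f = ∑ j, Lstar j (β j) := by
      intro β hβ
      set fs : H := ∑ j, Lstar j (β j) with hfs
      have hC : ∀ i, ((∫ t in a i..b i, ev fs (x i t)) - x i (b i) + x i (a i))
          = (-(lam * (n : ℝ))) • β i := by
        intro i
        ext p
        simp only [PiLp.add_apply, PiLp.sub_apply, PiLp.smul_apply, smul_eq_mul]
        rw [hfs, hTS β i p]
        have := hβ i p
        linarith
      have hD : ∀ g : H,
          ∑ i, ⟪(∫ t in a i..b i, ev fs (x i t)) - x i (b i) + x i (a i),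
                ∫ t in a i..b i, ev g (x i t)⟫
            = -(lam * (n : ℝ)) * ⟪fs, g⟫ := by
        intro g
        calc ∑ i, ⟪(∫ t in a i..b i, ev fs (x i t)) - x i (b i) + x i (a i),
                ∫ t in a i..b i, ev g (x i t)⟫
            = ∑ i, ⟪(-(lam * (n : ℝ))) • β i, ∫ t in a i..b i, ev g (x i t)⟫ :=
              Finset.sum_congr rfl fun i _ => by rw [hC i]
          _ = ∑ i, (-(lam * (n : ℝ))) * ⟪β i, ∫ t in a i..b i, ev g (x i t)⟫ :=
              Finset.sum_congr rfl fun i _ => real_inner_smul_left _ _ _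
          _ = (-(lam * (n : ℝ))) * ∑ i, ⟪g, Lstar i (β i)⟫ := by
              rw [← Finset.mul_sum]
              congr 1
              exact Finset.sum_congr rfl fun i _ => hLstar i (β i) g
          _ = -(lam * (n : ℝ)) * ⟪fs, g⟫ := by
              rw [← inner_sum, ← hfs, real_inner_comm]
      have key : ∀ g : H, J g = J fs
          + (1 / (n : ℝ)) * ∑ i, ‖∫ t in a i..b i, ev (g - fs) (x i t)‖ ^ 2
          + lam * ‖g - fs‖ ^ 2 := by
        intro g
        have hg : g = fs + (g - fs) := by abel
        have hTg : ∀ i, (∫ t in a i..b i, ev g (x i t))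
            = (∫ t in a i..b i, ev fs (x i t)) + ∫ t in a i..b i, ev (g - fs) (x i t) := by
          intro i
          conv_lhs => rw [hg]
          exact hTadd fs (g - fs) i
        have hterm : ∀ i, ‖(∫ t in a i..b i, ev g (x i t)) - x i (b i) + x i (a i)‖ ^ 2
            = ‖(∫ t in a i..b i, ev fs (x i t)) - x i (b i) + x i (a i)‖ ^ 2
              + 2 * ⟪(∫ t in a i..b i, ev fs (x i t)) - x i (b i) + x i (a i),
                  ∫ t in a i..b i, ev (g - fs) (x i t)⟫
              + ‖∫ t in a i..b i, ev (g - fs) (x i t)‖ ^ 2 := by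
          intro i
          rw [hTg i]
          rw [show (∫ t in a i..b i, ev fs (x i t)) + (∫ t in a i..b i, ev (g - fs) (x i t))
              - x i (b i) + x i (a i)
              = ((∫ t in a i..b i, ev fs (x i t)) - x i (b i) + x i (a i))
                + ∫ t in a i..b i, ev (g - fs) (x i t) from by abel]
          exact norm_add_sq_real _ _
        have hng : ‖g‖ ^ 2 = ‖fs‖ ^ 2 + 2 * ⟪fs, g - fs⟫ + ‖g - fs‖ ^ 2 := by
          conv_lhs => rw [hg]
          exact norm_add_sq_real _ _
        rw [hJ g, hJ fs]
        rw [Finset.sum_congr rfl fun i _ => hterm i]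
        rw [Finset.sum_add_distrib, Finset.sum_add_distrib, ← Finset.mul_sum]
        rw [hD (g - fs), hng]
        have hinv : (1 / (n : ℝ)) * (n : ℝ) = 1 := one_div_mul_cancel (ne_of_gt hn')
        linear_combination (-2 * lam * ⟪fs, g - fs⟫) * hinv
      constructor
      · intro g
        rw [key g]
        have h1 : 0 ≤ (1 / (n : ℝ)) * ∑ i, ‖∫ t in a i..b i, ev (g - fs) (x i t)‖ ^ 2 := by
          positivity
        have h2 : 0 ≤ lam * ‖g - fs‖ ^ 2 := by positivity
        linarith
      · intro f hf
        have h1 := hf fs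
        have h2 := key f
        have h3 : 0 ≤ (1 / (n : ℝ)) * ∑ i, ‖∫ t in a i..b i, ev (f - fs) (x i t)‖ ^ 2 := by
          positivity
        have h4 : ‖f - fs‖ ^ 2 ≤ 0 := by nlinarith
        have h5 : ‖f - fs‖ = 0 := by nlinarith [norm_nonneg (f - fs)]
        exact sub_eq_zero.mp (norm_eq_zero.mp h5)
    -- existence and uniqueness of the solution of the linear system
    have hsys : ∃! α : Fin n → EuclideanSpace ℝ (Fin d), ∀ (i : Fin n) (p : Fin d),
        (∑ j, ∑ q, Lb i j p q * α j q) + lam * (n : ℝ) * α i p =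
          x i (b i) p - x i (a i) p := by
      let M : (Fin n → EuclideanSpace ℝ (Fin d)) →ₗ[ℝ] (Fin n → EuclideanSpace ℝ (Fin d)) :=
      { toFun := fun β i => WithLp.toLp 2 (fun p => (∑ j, ∑ q, Lb i j p q * β j q) + lam * (n : ℝ) * β i p),
        map_add' := by
          intro β γ
          funext i; ext p
          simp only [PiLp.toLp_apply, Pi.add_apply, PiLp.add_apply, mul_add, Finset.sum_add_distrib]
          ring
        map_smul' := by
          intro r β
          funext i; ext p
          simp only [PiLp.toLp_apply, Pi.smul_apply, PiLp.smul_apply, smul_eq_mul, RingHom.id_apply,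
            mul_add, Finset.mul_sum]
          congr 1
          · refine Finset.sum_congr rfl fun j _ => Finset.sum_congr rfl fun q _ => by ring
          · ring }
      have happ : ∀ β i p, M β i p = (∑ j, ∑ q, Lb i j p q * β j q) + lam * (n : ℝ) * β i p :=
        fun β i p => rfl
      have hMinj : Function.Injective M := by
        rw [injective_iff_map_eq_zero]
        intro β hβ0
        have hcomp : ∀ i p, (∑ j, ∑ q, Lb i j p q * β j q) + lam * (n : ℝ) * β i p = 0 := by
          intro i p
          have h0 := congrArg (fun v : EuclideanSpace ℝ (Fin d) => v p) (congrFun hβ0 i)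
          simp only at h0
          rw [happ] at h0
          simpa using h0
        set fs : H := ∑ j, Lstar j (β j) with hfs
        have e2 : ∀ i, ∑ p, β i p * ((∫ t in a i..b i, ev fs (x i t)) p)
            = ⟪fs, Lstar i (β i)⟫ := by
          intro i
          rw [← hLstar i (β i) fs]
          simp [PiLp.inner_apply, RCLike.inner_apply]; exact Finset.sum_congr rfl fun _ _ => mul_comm _ _
        have e3 : ∑ i, ⟪fs, Lstar i (β i)⟫ = ‖fs‖ ^ 2 := by
          rw [← inner_sum, ← hfs, real_inner_self_eq_norm_sq]
        have e4 : ∑ i, ∑ p, β i p * ((∑ j, ∑ q, Lb i j p q * β j q) + lam * (n : ℝ) * β i p)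
            = ‖fs‖ ^ 2 + lam * (n : ℝ) * ∑ i, ∑ p, β i p ^ 2 := by
          have step : ∑ i, ∑ p, β i p * ((∑ j, ∑ q, Lb i j p q * β j q) + lam * (n : ℝ) * β i p)
              = (∑ i, ∑ p, β i p * ((∫ t in a i..b i, ev fs (x i t)) p))
                + lam * (n : ℝ) * ∑ i, ∑ p, β i p ^ 2 := by
            rw [Finset.mul_sum, ← Finset.sum_add_distrib]
            refine Finset.sum_congr rfl fun i _ => ?_
            rw [Finset.mul_sum, ← Finset.sum_add_distrib]
            refine Finset.sum_congr rfl fun p _ => ?_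
            rw [hfs, hTS β i p]
            ring
          rw [step]
          congr 1
          rw [Finset.sum_congr rfl fun i _ => e2 i, e3]
        have e5 : (0 : ℝ) = ‖fs‖ ^ 2 + lam * (n : ℝ) * ∑ i, ∑ p, β i p ^ 2 := by
          rw [← e4]
          exact (Finset.sum_eq_zero fun i _ => Finset.sum_eq_zero fun p _ => by
            rw [hcomp i p]; ring).symm
        have hS_nonneg : (0 : ℝ) ≤ ∑ i, ∑ p, β i p ^ 2 :=
          Finset.sum_nonneg fun i _ => Finset.sum_nonneg fun p _ => sq_nonneg _
        have hmul : lam * (n : ℝ) * (∑ i, ∑ p, β i p ^ 2) ≤ lam * (n : ℝ) * 0 := by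
          nlinarith [sq_nonneg ‖fs‖]
        have hSle : (∑ i, ∑ p, β i p ^ 2) ≤ 0 :=
          le_of_mul_le_mul_left hmul (mul_pos hlam hn')
        have hSq : ∑ i, ∑ p, β i p ^ 2 = 0 := le_antisymm hSle hS_nonneg
        funext i; ext p
        have h1 := (Finset.sum_eq_zero_iff_of_nonneg
          (fun i _ => Finset.sum_nonneg fun p _ => sq_nonneg (β i p))).mp hSq i (Finset.mem_univ i)
        have h2 := (Finset.sum_eq_zero_iff_of_nonneg
          (fun p _ => sq_nonneg (β i p))).mp h1 p (Finset.mem_univ p)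
        have hz : β i p = 0 := pow_eq_zero_iff two_ne_zero |>.mp h2
        simpa using hz
      have hMsurj : Function.Surjective M :=
        LinearMap.injective_iff_surjective.mp hMinj
      obtain ⟨α₀, hMα₀⟩ := hMsurj (fun i => x i (b i) - x i (a i))
      have hα₀comp : ∀ (i : Fin n) (p : Fin d),
          (∑ j, ∑ q, Lb i j p q * α₀ j q) + lam * (n : ℝ) * α₀ i p
            = x i (b i) p - x i (a i) p := by
        intro i p
        have h0 := congrArg (fun v : EuclideanSpace ℝ (Fin d) => v p) (congrFun hMα₀ i)
        simp only at h0
        rw [happ] at h0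
        simpa [PiLp.sub_apply] using h0
      refine ⟨α₀, hα₀comp, ?_⟩
      intro β hβ
      apply hMinj
      funext i; ext p
      rw [happ, happ, hβ i p, hα₀comp i p]
    obtain ⟨α₀, hα₀, hα₀u⟩ := hsys
    refine ⟨⟨∑ j, Lstar j (α₀ j), (main α₀ hα₀).1, fun f hf => (main α₀ hα₀).2 f hf⟩,
      ⟨α₀, hα₀, hα₀u⟩, fun f β hf hβ => (main β hβ).2 f hf⟩
end

section
/- (Theorem 2) Define Q(f) = sup { (1/n) Σ_{i=1}^n [∫_{a_i}^{b_i} (ẋ_i(t) − f(x_i(t)))ᵀ Φ_i(t) dt]² : Φ_i ∈ 𝒢_i with ‖Φ_i‖_{𝒢_i} = 1 for each i }. Then Q(f) = (1/n) Σ_{i=1}^n ∫_{a_i}^{b_i} ∫_{a_i}^{b_i} (ẋ_i(s) − f(x_i(s)))ᵀ G_i(s,t) (ẋ_i(t) − f(x_i(t))) ds dt. Moreover, if for each i the kernel is constant identity, G_i(s,t) = I_d for all s,t (so 𝒢_i is the space of constant ℝ^d-valued functions with the Euclidean inner product), then Q(f) = (1/n) Σ_{i=1}^n ‖∫_{a_i}^{b_i}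 f(x_i(t)) dt − x_i(b_i) + x_i(a_i)‖²_{ℝ^d}. -/
open scoped RealInnerProductSpace

open intervalIntegral Set

/-- Continuity of a map into a Hilbert space from continuity of the Gram function. -/
lemma stmt18_kernel_cont {H : Type*} [NormedAddCommGroup H] [InnerProductSpace ℝ H]
    {A : Set ℝ} (e : ℝ → H)
    (hc : ContinuousOn (fun st : ℝ × ℝ => ⟪e st.1, e st.2⟫) (A ×ˢ A)) :
    ContinuousOn e A := by
  have C1 : ContinuousOn (fun t => ⟪e t, e t⟫) A :=
    ContinuousOn.comp hc (continuousOn_id.prodMk continuousOn_id) (fun t ht => ⟨ht, ht⟩)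
  intro s hs
  have c1 : ContinuousWithinAt (fun t => ⟪e t, e t⟫) A s := C1 s hs
  have c2 : ContinuousWithinAt (fun t => ⟪e t, e s⟫) A s :=
    (ContinuousOn.comp hc (continuousOn_id.prodMk continuousOn_const)
      (fun t ht => ⟨ht, hs⟩)) s hs
  have h1 : Filter.Tendsto (fun t => ⟪e t, e t⟫ - 2 * ⟪e t, e s⟫ + ⟪e s, e s⟫)
      (nhdsWithin s A) (nhds 0) := by
    have h0 : ContinuousWithinAt (fun t => ⟪e t, e t⟫ - 2 * ⟪e t, e s⟫ + ⟪e s, e s⟫) A s :=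
      (c1.sub (continuousWithinAt_const.mul c2)).add continuousWithinAt_const
    have h0' := h0.tendsto
    rwa [show ⟪e s, e s⟫ - 2 * ⟪e s, e s⟫ + ⟪e s, e s⟫ = (0:ℝ) by ring] at h0'
  have hnorm : ∀ t, ‖e t - e s‖ = Real.sqrt (⟪e t, e t⟫ - 2 * ⟪e t, e s⟫ + ⟪e s, e s⟫) := by
    intro t
    rw [show ⟪e t, e t⟫ - 2 * ⟪e t, e s⟫ + ⟪e s, e s⟫
        = ‖e t‖ ^ 2 - 2 * ⟪e t, e s⟫ + ‖e s‖ ^ 2 by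
      rw [real_inner_self_eq_norm_sq, real_inner_self_eq_norm_sq]]
    rw [← norm_sub_sq_real, Real.sqrt_sq (norm_nonneg _)]
  have key : Filter.Tendsto (fun t => ‖e t - e s‖) (nhdsWithin s A) (nhds 0) := by
    have h2 := (Real.continuous_sqrt.continuousAt (x := (0:ℝ))).tendsto.comp h1
    have h3 : Filter.Tendsto
        (fun t => Real.sqrt (⟪e t, e t⟫ - 2 * ⟪e t, e s⟫ + ⟪e s, e s⟫))
        (nhdsWithin s A) (nhds 0) := by simpa [Function.comp_def] using h2
    exact h3.congr (fun t => (hnorm t).symm)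
  exact tendsto_iff_norm_sub_tendsto_zero.mpr key

/-- Double integral of the Euclidean inner product equals the squared norm of the integral. -/
lemma stmt18_double_int {d : ℕ} (a b : ℝ) (hab : a ≤ b) (y : ℝ → EuclideanSpace ℝ (Fin d))
    (hy : ContinuousOn y (Set.Icc a b)) :
    (∫ s in a..b, ∫ t in a..b, ⟪y s, y t⟫) = ‖∫ t in a..b, y t‖ ^ 2 := by
  have hint : IntervalIntegrable y MeasureTheory.volume a b := by
    apply ContinuousOn.intervalIntegrable
    rwa [Set.uIcc_of_le hab]
  set Y := ∫ t in a..b, y t with hY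
  have inner_int : ∀ s, (∫ t in a..b, ⟪y s, y t⟫) = ⟪y s, Y⟫ := by
    intro s
    have h := (innerSL ℝ (y s)).intervalIntegral_comp_comm hint
    simpa using h
  have outer : (∫ s in a..b, ⟪Y, y s⟫) = ⟪Y, Y⟫ := by
    have h := (innerSL ℝ Y).intervalIntegral_comp_comm hint
    simp only [innerSL_apply_apply] at h
    exact h
  calc (∫ s in a..b, ∫ t in a..b, ⟪y s, y t⟫)
      = ∫ s in a..b, ⟪Y, y s⟫ := by
        refine intervalIntegral.integral_congr fun s _ => ?_
        rw [inner_int s, real_inner_comm]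
    _ = ⟪Y, Y⟫ := outer
    _ = ‖Y‖ ^ 2 := real_inner_self_eq_norm_sq Y

/-- The key per-curve lemma: existence of the representer of the linear functional, and the
formula for its squared norm. -/
lemma stmt18_curve_key {d : ℕ} {H : Type*} [NormedAddCommGroup H] [InnerProductSpace ℝ H]
    [CompleteSpace H]
    (a b : ℝ) (hab : a ≤ b)
    (y : ℝ → EuclideanSpace ℝ (Fin d)) (hy : ContinuousOn y (Set.Icc a b))
    (ev : H →ₗ[ℝ] (ℝ → EuclideanSpace ℝ (Fin d)))
    (k : ℝ → EuclideanSpace ℝ (Fin d) → H)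
    (hrepr : ∀ t ∈ Set.Icc a b, ∀ (v : EuclideanSpace ℝ (Fin d)) (Φ : H),
      ⟪v, ev Φ t⟫ = ⟪Φ, k t v⟫)
    (Gm : ℝ → ℝ → Fin d → Fin d → ℝ)
    (hGm : ∀ s t p q, Gm s t p q
      = ⟪k s (EuclideanSpace.single p 1), k t (EuclideanSpace.single q 1)⟫)
    (hGc : ∀ p q, ContinuousOn (fun st : ℝ × ℝ => Gm st.1 st.2 p q)
      (Set.Icc a b ×ˢ Set.Icc a b)) :
    ∃ μ : H, (∀ Φ : H, (∫ t in a..b, ⟪y t - 0, ev Φ t⟫) = ⟪Φ, μ⟫) ∧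
      ‖μ‖ ^ 2 = ∫ s in a..b, ∫ t in a..b, ∑ p, ∑ q, y s p * Gm s t p q * y t q := by
  classical
  set g : ℝ → H := fun t => ∑ p, y t p • k t (EuclideanSpace.single p 1) with hg
  -- continuity of g on Icc
  have hec : ∀ p : Fin d, ContinuousOn (fun t => k t (EuclideanSpace.single p 1))
      (Set.Icc a b) := by
    intro p
    apply stmt18_kernel_cont
    have := hGc p p
    simp only [hGm] at this
    exact this
  have hgc : ContinuousOn g (Set.Icc a b) := by
    apply continuousOn_finset_sum
    intro p _
    exact (((EuclideanSpace.proj p).continuous.comp_continuousOn hy)).smul (hec p)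
  have hgint : IntervalIntegrable g MeasureTheory.volume a b := by
    apply ContinuousOn.intervalIntegrable
    rwa [Set.uIcc_of_le hab]
  set μ : H := ∫ t in a..b, g t with hμ
  -- ⟪Φ, g t⟫ = ⟪y t, ev Φ t⟫ for t ∈ Icc
  have claim1 : ∀ t ∈ Set.Icc a b, ∀ Φ : H, ⟪Φ, g t⟫ = ⟪y t, ev Φ t⟫ := by
    intro t ht Φ
    rw [hg]
    simp only [inner_sum, real_inner_smul_right]
    have : ∀ p : Fin d, ⟪Φ, k t (EuclideanSpace.single p 1)⟫ = ev Φ t p := by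
      intro p
      rw [← hrepr t ht (EuclideanSpace.single p 1) Φ, EuclideanSpace.inner_single_left]
      simp
    simp only [this]
    rw [PiLp.inner_apply]
    simp [RCLike.inner_apply]
    exact Finset.sum_congr rfl fun _ _ => mul_comm _ _
  have claim3 : ∀ s ∈ Set.Icc a b, ∀ t ∈ Set.Icc a b,
      ⟪g s, g t⟫ = ∑ p, ∑ q, y s p * Gm s t p q * y t q := by
    intro s hs t ht
    rw [hg]
    simp only [sum_inner, inner_sum, real_inner_smul_left, real_inner_smul_right]
    rw [Finset.sum_comm]
    refine Finset.sum_congr rfl fun p _ => Finset.sum_congr rfl fun q _ => ?_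
    rw [hGm]
    ring
  refine ⟨μ, ?_, ?_⟩
  · intro Φ
    have : (∫ t in a..b, ⟪y t - 0, ev Φ t⟫) = ∫ t in a..b, ⟪Φ, g t⟫ := by
      refine intervalIntegral.integral_congr fun t ht => ?_
      rw [Set.uIcc_of_le hab] at ht
      rw [sub_zero, claim1 t ht Φ]
    rw [this]
    have h := (innerSL ℝ Φ).intervalIntegral_comp_comm hgint
    simpa using h
  · have step : ∀ s ∈ Set.Icc a b,
        (∫ t in a..b, ∑ p, ∑ q, y s p * Gm s t p q * y t q) = ⟪μ, g s⟫ := by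
      intro s hs
      have e1 : (∫ t in a..b, ∑ p, ∑ q, y s p * Gm s t p q * y t q)
          = ∫ t in a..b, ⟪g s, g t⟫ := by
        refine intervalIntegral.integral_congr fun t ht => ?_
        rw [Set.uIcc_of_le hab] at ht
        exact (claim3 s hs t ht).symm
      have h2 := (innerSL ℝ (g s)).intervalIntegral_comp_comm hgint
      simp only [innerSL_apply_apply] at h2
      rw [e1, h2, real_inner_comm]
    calc ‖μ‖ ^ 2 = ⟪μ, μ⟫ := (real_inner_self_eq_norm_sq μ).symm
      _ = ∫ s in a..b, ⟪μ, g s⟫ := by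
          have h3 := (innerSL ℝ μ).intervalIntegral_comp_comm hgint
          simp only [innerSL_apply_apply] at h3
          exact h3.symm
      _ = ∫ s in a..b, ∫ t in a..b, ∑ p, ∑ q, y s p * Gm s t p q * y t q := by
        refine intervalIntegral.integral_congr fun s hs => ?_
        rw [Set.uIcc_of_le hab] at hs
        exact (step s hs).symm

/-- Theorem 2: With
`Q(f) = sup { (1/n) Σ_i [∫_{a_i}^{b_i} (ẋ_i(t) − f(x_i(t)))ᵀ Φ_i(t) dt]² : ‖Φ_i‖ = 1 }`,
one has
`Q(f) = (1/n) Σ_i ∫∫ (ẋ_i(s) − f(x_i(s)))ᵀ G_i(s,t) (ẋ_i(t) − f(x_i(t))) ds dt`;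
moreover if each `G_i(s,t) = I_d`, then
`Q(f) = (1/n) Σ_i ‖∫_{a_i}^{b_i} f(x_i(t)) dt − x_i(b_i) + x_i(a_i)‖²`. -/
theorem stmt_18
    (d n : ℕ) (hd : 1 ≤ d)
    -- a continuous candidate vector field `f`
    (f : EuclideanSpace ℝ (Fin d) → EuclideanSpace ℝ (Fin d)) (hf : Continuous f)
    -- the continuously differentiable curves `x_i : [a_i,b_i] → ℝ^d` with derivatives `ẋ_i`
    (a b : Fin n → ℝ) (hab : ∀ i, a i ≤ b i)
    (x x' : Fin n → ℝ → EuclideanSpace ℝ (Fin d))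
    (hx : ∀ i, ∀ t ∈ Set.Icc (a i) (b i),
      HasDerivWithinAt (x i) (x' i t) (Set.Icc (a i) (b i)) t)
    (hx' : ∀ i, ContinuousOn (x' i) (Set.Icc (a i) (b i)))
    -- the nontrivial RKHSs `𝒢_i` of continuous test functions `[a_i,b_i] → ℝ^d`
    (G : Fin n → Type*) [∀ i, NormedAddCommGroup (G i)] [∀ i, InnerProductSpace ℝ (G i)]
    [∀ i, CompleteSpace (G i)] [∀ i, Nontrivial (G i)]
    (ev : ∀ i, G i →ₗ[ℝ] (ℝ → EuclideanSpace ℝ (Fin d)))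
    (hevc : ∀ (i : Fin n) (Φ : G i), ContinuousOn (ev i Φ) (Set.Icc (a i) (b i)))
    (Grepr : ∀ i : Fin n, ℝ → EuclideanSpace ℝ (Fin d) → G i)
    (hrepr : ∀ (i : Fin n), ∀ t ∈ Set.Icc (a i) (b i),
      ∀ (v : EuclideanSpace ℝ (Fin d)) (Φ : G i),
      ⟪v, ev i Φ t⟫ = ⟪Φ, Grepr i t v⟫)
    -- the matrix-valued kernels `G_i`, with continuous entries
    (Gmat : Fin n → ℝ → ℝ → Fin d → Fin d → ℝ)
    (hGmat : ∀ i s t p q, Gmat i s t p q =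
      ⟪Grepr i s (EuclideanSpace.single p 1), Grepr i t (EuclideanSpace.single q 1)⟫)
    (hGc : ∀ (i : Fin n) (p q : Fin d),
      ContinuousOn (fun st : ℝ × ℝ => Gmat i st.1 st.2 p q)
        (Set.Icc (a i) (b i) ×ˢ Set.Icc (a i) (b i)))
    -- the weak-formulation functional `Q(f)`
    (Q : ℝ)
    (hQ : Q = sSup {r : ℝ | ∃ Φ : ∀ i, G i, (∀ i, ‖Φ i‖ = 1) ∧
      r = (1 / (n : ℝ)) * ∑ i,
        (∫ t in a i..b i, ⟪x' i t - f (x i t), ev i (Φ i) t⟫) ^ 2}) :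
    (Q = (1 / (n : ℝ)) * ∑ i, ∫ s in a i..b i, ∫ t in a i..b i,
      ∑ p, ∑ q, (x' i s - f (x i s)) p * Gmat i s t p q * (x' i t - f (x i t)) q)
    ∧ ((∀ i s t p q, Gmat i s t p q = if p = q then (1 : ℝ) else 0) →
      Q = (1 / (n : ℝ)) * ∑ i,
        ‖(∫ t in a i..b i, f (x i t)) - x i (b i) + x i (a i)‖ ^ 2) := by
  classical
  -- the "residual" curves
  set y : Fin n → ℝ → EuclideanSpace ℝ (Fin d) := fun i t => x' i t - f (x i t) with hy
  have hxc : ∀ i, ContinuousOn (x i) (Set.Icc (a i) (b i)) :=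
    fun i t ht => (hx i t ht).continuousWithinAt
  have hyc : ∀ i, ContinuousOn (y i) (Set.Icc (a i) (b i)) :=
    fun i => (hx' i).sub (hf.comp_continuousOn (hxc i))
  -- the representers
  have key := fun i => stmt18_curve_key (a i) (b i) (hab i) (y i) (hyc i) (ev i) (Grepr i)
    (hrepr i) (Gmat i) (hGmat i) (hGc i)
  choose μ hμ1 hμ2 using key
  -- the value of the functional at any test tuple
  have hval : ∀ (Φ : ∀ i, G i) (i : Fin n),
      (∫ t in a i..b i, ⟪x' i t - f (x i t), ev i (Φ i) t⟫) = ⟪Φ i, μ i⟫ := by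
    intro Φ i
    have := hμ1 i (Φ i)
    simpa [hy] using this
  -- Q equals (1/n) Σ ‖μ i‖²
  have hQval : Q = (1 / (n : ℝ)) * ∑ i, ‖μ i‖ ^ 2 := by
    rw [hQ]
    apply IsGreatest.csSup_eq
    constructor
    · -- membership: maximizing Φ
      have hunit : ∀ i, ∃ Φ : G i, ‖Φ‖ = 1 ∧ ⟪Φ, μ i⟫ ^ 2 = ‖μ i‖ ^ 2 := by
        intro i
        by_cases h : μ i = 0
        · obtain ⟨v, hv⟩ := exists_ne (0 : G i)
          refine ⟨‖v‖⁻¹ • v, ?_, by simp [h]⟩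
          rw [norm_smul]
          simp [inv_mul_cancel₀ (norm_ne_zero_iff.mpr hv)]
        · have hn : ‖μ i‖ ≠ 0 := norm_ne_zero_iff.mpr h
          refine ⟨‖μ i‖⁻¹ • μ i, ?_, ?_⟩
          · rw [norm_smul]
            simp [inv_mul_cancel₀ hn]
          · rw [real_inner_smul_left, real_inner_self_eq_norm_sq]
            field_simp
      choose Φ hΦn hΦv using hunit
      refine ⟨Φ, hΦn, ?_⟩
      congr 1
      refine Finset.sum_congr rfl fun i _ => ?_
      rw [hval Φ i, hΦv i]
    · -- upper bound via Cauchy–Schwarz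
      rintro r ⟨Φ, hΦ, rfl⟩
      apply mul_le_mul_of_nonneg_left _ (by positivity)
      refine Finset.sum_le_sum fun i _ => ?_
      rw [hval Φ i]
      calc ⟪Φ i, μ i⟫ ^ 2 = |⟪Φ i, μ i⟫| ^ 2 := (sq_abs _).symm
        _ ≤ (‖Φ i‖ * ‖μ i‖) ^ 2 := by
            apply pow_le_pow_left₀ (abs_nonneg _)
            exact abs_real_inner_le_norm _ _
        _ = ‖μ i‖ ^ 2 := by rw [hΦ i, one_mul]
  constructor
  · rw [hQval]
    congr 1
    exact Finset.sum_congr rfl fun i _ => hμ2 i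
  · intro hδ
    rw [hQval]
    congr 1
    refine Finset.sum_congr rfl fun i _ => ?_
    rw [hμ2 i]
    have e1 : ∀ s t : ℝ, (∑ p, ∑ q, y i s p * Gmat i s t p q * y i t q) = ⟪y i s, y i t⟫ := by
      intro s t
      simp only [hδ, mul_ite, ite_mul, mul_one, mul_zero, zero_mul,
        Finset.sum_ite_eq, Finset.mem_univ, if_true]
      rw [PiLp.inner_apply]
      simp [RCLike.inner_apply]
      exact Finset.sum_congr rfl fun _ _ => mul_comm _ _
    have e2 : (∫ s in a i..b i, ∫ t in a i..b i,
        ∑ p, ∑ q, y i s p * Gmat i s t p q * y i t q)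
        = ∫ s in a i..b i, ∫ t in a i..b i, ⟪y i s, y i t⟫ := by
      simp only [e1]
    have := stmt18_double_int (a i) (b i) (hab i) (y i) (hyc i)
    rw [show (∫ s in a i..b i, ∫ t in a i..b i,
        ∑ p, ∑ q, (x' i s - f (x i s)) p * Gmat i s t p q * (x' i t - f (x i t)) q)
      = ∫ s in a i..b i, ∫ t in a i..b i,
        ∑ p, ∑ q, y i s p * Gmat i s t p q * y i t q from rfl, e2, this]
    -- now compute ∫ y via FTC
    have hint1 : IntervalIntegrable (x' i) MeasureTheory.volume (a i) (b i) := by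
      apply ContinuousOn.intervalIntegrable
      rw [Set.uIcc_of_le (hab i)]
      exact hx' i
    have hint2 : IntervalIntegrable (fun t => f (x i t)) MeasureTheory.volume (a i) (b i) := by
      apply ContinuousOn.intervalIntegrable
      rw [Set.uIcc_of_le (hab i)]
      exact hf.comp_continuousOn (hxc i)
    have hFTC : (∫ t in a i..b i, x' i t) = x i (b i) - x i (a i) := by
      apply intervalIntegral.integral_eq_sub_of_hasDeriv_right_of_le (hab i) (hxc i) _ hint1
      intro t ht
      exact (hx i t ⟨le_of_lt ht.1, le_of_lt ht.2⟩).mono_of_mem_nhdsWithin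
        (Icc_mem_nhdsGT_of_mem ⟨le_of_lt ht.1, ht.2⟩)
    have hY : (∫ t in a i..b i, y i t)
        = -((∫ t in a i..b i, f (x i t)) - x i (b i) + x i (a i)) := by
      rw [show y i = fun t => x' i t - f (x i t) from rfl]
      rw [intervalIntegral.integral_sub hint1 hint2, hFTC]
      abel
    rw [hY, norm_neg]
end
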